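/- Let X be a finite simple graph on n vertices with at least one edge and largest Laplacian eigenvalue λ_max. Let U be a non-empty independent set of vertices of X and let deg(U) = (1/|U|)·Σ_{v∈U} deg(v) be the average degree over U. Then |U| ≤ n(1 − deg(U)/λ_max). -/

import Mathlib

open Finset

/-- The independence number: the largest size of a set of pairwise non-adjacent vertices. -/
noncomputable def indepNum {V : Type*} (G : SimpleGraph V) : ℕ :=
  sSup {n | ∃ s : Finset V, (∀ v ∈ s, ∀ w ∈ s, ¬ G.Adj v w) ∧ s.card = n}

/-- The degree of a vertex: the number of its neighbours. -/
noncomputable def deg {V : Type*} (G : SimpleGraph V) (v : V) : ℕ :=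
  (G.neighborSet v).ncard

/-- The minimal degree. -/
noncomputable def minDeg {V : Type*} (G : SimpleGraph V) : ℕ :=
  sInf (Set.range (deg G))

/-- The maximal degree. -/
noncomputable def maxDeg {V : Type*} (G : SimpleGraph V) : ℕ :=
  sSup (Set.range (deg G))

/-- The largest eigenvalue of the Laplacian matrix `L = D - A`. -/
noncomputable def lapMax {V : Type*} [Fintype V] (G : SimpleGraph V) : ℝ :=
  letI := Classical.decEq V
  letI := Classical.decRel G.Adj
  ⨆ i, (SimpleGraph.posSemidef_lapMatrix ℝ G).1.eigenvalues i

/-- The derived graph: the induced subgraph on the vertices of non-maximal degree. -/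
noncomputable def derived {V : Type*} (G : SimpleGraph V) :
    SimpleGraph {v : V | deg G v < maxDeg G} :=
  G.induce {v : V | deg G v < maxDeg G}

/-!
Test the Rayleigh quotient of the Laplacian on `x = n • 𝟙_U - |U| • 𝟙`. The Laplacian form is
invariant under adding constants, and on the indicator of an independent set it equals
`∑_{v ∈ U} deg v`; hence `n² ∑_{v ∈ U} deg v ≤ λ_max ‖x‖² = λ_max n |U| (n - |U|)`.
-/

open Matrix

open scoped MatrixOrder in
lemma Matrix.IsHermitian.dotProduct_mulVec_le_iSup_eigenvalues_mul {n : Type*} [Fintype n]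
    [DecidableEq n] {A : Matrix n n ℝ} (hA : A.IsHermitian) (x : n → ℝ) :
    x ⬝ᵥ A *ᵥ x ≤ (⨆ i, hA.eigenvalues i) * (x ⬝ᵥ x) := by
  have hle : A ≤ algebraMap ℝ _ (⨆ i, hA.eigenvalues i) := by
    rw [le_algebraMap_iff_spectrum_le hA.isSelfAdjoint, hA.spectrum_real_eq_range_eigenvalues]
    rintro _ ⟨i, rfl⟩
    exact le_ciSup (Set.finite_range _).bddAbove i
  simpa [Algebra.algebraMap_eq_smul_one, sub_mulVec, smul_mulVec] using
    (Matrix.le_iff.mp hle).dotProduct_mulVec_nonneg x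

lemma deg_eq_degree {V : Type*} (G : SimpleGraph V) (v : V) [Fintype (G.neighborSet v)] :
    deg G v = G.degree v := by
  rw [deg, ← Nat.card_coe_set_eq, Nat.card_eq_fintype_card, G.card_neighborSet_eq_degree]

section lapMax

variable {V : Type*} [Fintype V] [DecidableEq V] (G : SimpleGraph V) [DecidableRel G.Adj]

lemma lapMax_eq_iSup_eigenvalues :
    lapMax G = ⨆ i, (G.posSemidef_lapMatrix ℝ).1.eigenvalues i := by
  unfold lapMax
  congr!

lemma lapMax_nonneg : 0 ≤ lapMax G := by
  rw [lapMax_eq_iSup_eigenvalues]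
  exact Real.iSup_nonneg (G.posSemidef_lapMatrix ℝ).eigenvalues_nonneg

lemma dotProduct_lapMatrix_mulVec_le_lapMax_mul (x : V → ℝ) :
    x ⬝ᵥ G.lapMatrix ℝ *ᵥ x ≤ lapMax G * (x ⬝ᵥ x) := by
  rw [lapMax_eq_iSup_eigenvalues]
  exact (G.posSemidef_lapMatrix ℝ).1.dotProduct_mulVec_le_iSup_eigenvalues_mul x

end lapMax

namespace SimpleGraph

variable {V : Type*} [Fintype V] [DecidableEq V] (G : SimpleGraph V) [DecidableRel G.Adj]

lemma dotProduct_lapMatrix_mulVec_sub_const (x : V → ℝ) (c : ℝ) :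
    (x - fun _ => c) ⬝ᵥ G.lapMatrix ℝ *ᵥ (x - fun _ => c) = x ⬝ᵥ G.lapMatrix ℝ *ᵥ x := by
  simp only [← toLinearMap₂'_apply', lapMatrix_toLinearMap₂', Pi.sub_apply,
    sub_sub_sub_cancel_right]

lemma indicator_dotProduct_lapMatrix_mulVec_indicator {U : Finset V}
    (hU : ∀ v ∈ U, ∀ w ∈ U, ¬ G.Adj v w) :
    (fun v => if v ∈ U then (1 : ℝ) else 0) ⬝ᵥ G.lapMatrix ℝ *ᵥ (fun v => if v ∈ U then 1 else 0)
      = ∑ v ∈ U, (G.degree v : ℝ) := by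
  simp only [dotProduct, lapMatrix_mulVec_apply, ite_mul, one_mul, zero_mul,
    Finset.sum_ite_mem, Finset.univ_inter]
  refine Finset.sum_congr rfl fun v hv => ?_
  have hnbr : G.neighborFinset v ∩ U = ∅ := Finset.disjoint_iff_inter_eq_empty.mp <|
    Finset.disjoint_left.mpr fun w hw hwU => hU v hv w hwU ((G.mem_neighborFinset v w).mp hw)
  simp [hv, hnbr]

end SimpleGraph

lemma Finset.smul_indicator_sub_const_dotProduct_self {V : Type*} [Fintype V] [DecidableEq V]
    (U : Finset V) (a c : ℝ) :
    (a • (fun v => if v ∈ U then 1 else 0) - fun _ => c) ⬝ᵥ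
        (a • (fun v => if v ∈ U then 1 else 0) - fun _ => c)
      = #U * (a - c) ^ 2 + (Fintype.card V - #U) * c ^ 2 := by
  have hsq : ∀ v, (a * (if v ∈ U then 1 else 0) - c) * (a * (if v ∈ U then 1 else 0) - c)
      = if v ∈ U then (a - c) ^ 2 else c ^ 2 := by
    intro v; split_ifs <;> ring
  simp only [dotProduct, Pi.sub_apply, Pi.smul_apply, smul_eq_mul, hsq, Finset.sum_ite,
    Finset.sum_const, Finset.filter_mem_eq_inter, Finset.univ_inter, Finset.filter_notMem_eq_sdiff,
    nsmul_eq_mul, ← Finset.compl_eq_univ_sdiff, Finset.card_compl, Nat.cast_sub U.card_le_univ]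

lemma le_mul_one_sub_div_div_of_sq_mul_le {k n S μ : ℝ} (hμ : 0 ≤ μ) (hk : 0 ≤ k) (hkn : k ≤ n)
    (h : n ^ 2 * S ≤ μ * (n * k * (n - k))) :
    k ≤ n * (1 - S / k / μ) := by
  -- `S / 0 = 0`, so both degenerate cases reduce to `k ≤ n`.
  rcases hk.eq_or_lt with rfl | hk
  · simpa using hkn
  rcases hμ.eq_or_lt with rfl | hμ
  · simpa using hkn
  have hn : 0 < n := hk.trans_le hkn
  have hS : n * S ≤ μ * k * (n - k) := by nlinarith
  rw [div_div, mul_one_sub, le_sub_comm, mul_div_assoc', div_le_iff₀ (by positivity)]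
  linarith

theorem godsil_newman_average_degree_bound_general {V : Type*} [Fintype V] (G : SimpleGraph V)
    (U : Finset V) (hUind : ∀ v ∈ U, ∀ w ∈ U, ¬ G.Adj v w) :
    (U.card : ℝ) ≤ (Fintype.card V : ℝ)
      * (1 - ((∑ v ∈ U, (deg G v : ℝ)) / (U.card : ℝ)) / lapMax G) := by
  classical
  set n : ℝ := (Fintype.card V : ℝ)
  set k : ℝ := (#U : ℝ)
  have hray := dotProduct_lapMatrix_mulVec_le_lapMax_mul G
    (n • (fun v => if v ∈ U then 1 else 0) - fun _ => k)
  simp only [G.dotProduct_lapMatrix_mulVec_sub_const, mulVec_smul, smul_dotProduct,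
    dotProduct_smul, G.indicator_dotProduct_lapMatrix_mulVec_indicator hUind,
    U.smul_indicator_sub_const_dotProduct_self, smul_eq_mul] at hray
  refine le_mul_one_sub_div_div_of_sq_mul_le (lapMax_nonneg G) (Nat.cast_nonneg _)
    (Nat.cast_le.mpr U.card_le_univ) ?_
  simp only [deg_eq_degree]
  linarith

/-- **Godsil–Newman bound**: for a nonempty independent set `U`,
`|U| ≤ n (1 - deg(U) / λ_max)` where `deg(U)` is the average degree over `U`. -/
theorem godsil_newman_average_degree_bound {V : Type*} [Fintype V] (G : SimpleGraph V)
    (hne : ∃ v w, G.Adj v w) (U : Finset V) (hUne : U.Nonempty)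
    (hUind : ∀ v ∈ U, ∀ w ∈ U, ¬ G.Adj v w) :
    (U.card : ℝ) ≤ (Fintype.card V : ℝ)
      * (1 - ((∑ v ∈ U, (deg G v : ℝ)) / (U.card : ℝ)) / lapMax G) :=
  godsil_newman_average_degree_bound_general G U hUind
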